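/- arXiv:2312.05432 — 2 statements merged into one kernel-verified Lean document; each statement's English description precedes it below -/
import Mathlib

section
/- Let M ≥ 1, let β̄ ∈ (0,1] and μ̄ ≥ 1 be real numbers, let σ : ℕ → Fin M be a selecting signal, and let V : Fin M → ℕ → ℝ be a family of nonnegative functions such that (i) for every k ≥ 1, V (σ k) k ≤ β̄ · V (σ k) (k-1), and (ii) for all i, j ∈ Fin M and all k, V i k ≤ μ̄ · V j k. Then for all k₁ < k₂, V (σ k₂) k₂ ≤ μ̄^(N(k₁,k₂)) · β̄^(k₂ - k₁) · V (σ k₁) k₁, where N(k₁,k₂) is the number of indices k with k₁ < k ≤ k₂ and σ k ≠ σ (k-1). -/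
open Finset

theorem sola_switched_contraction_bound
    (M : ℕ) (hM : 1 ≤ M) (β μ : ℝ) (hβ0 : 0 < β) (hβ1 : β ≤ 1) (hμ : 1 ≤ μ)
    (σ : ℕ → Fin M) (V : Fin M → ℕ → ℝ)
    (hVnonneg : ∀ i k, 0 ≤ V i k)
    (hcontract : ∀ k, 1 ≤ k → V (σ k) k ≤ β * V (σ k) (k - 1))
    (hcompare : ∀ i j k, V i k ≤ μ * V j k) :
    ∀ k₁ k₂ : ℕ, k₁ < k₂ →
      V (σ k₂) k₂ ≤
        μ ^ ((Finset.Ioc k₁ k₂).filter (fun k => σ k ≠ σ (k - 1))).card *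
          β ^ (k₂ - k₁) * V (σ k₁) k₁ := by
  have hμ0 : (0:ℝ) ≤ μ := le_trans zero_le_one hμ
  -- one-step bound
  have step : ∀ k : ℕ, 1 ≤ k →
      V (σ k) k ≤ μ ^ (if σ k ≠ σ (k-1) then 1 else 0) * β * V (σ (k-1)) (k-1) := by
    intro k hk
    by_cases hs : σ k = σ (k-1)
    · rw [if_neg (by simp [hs]), pow_zero, one_mul]
      calc V (σ k) k ≤ β * V (σ k) (k-1) := hcontract k hk
        _ = β * V (σ (k-1)) (k-1) := by rw [hs]
    · rw [if_pos hs, pow_one]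
      calc V (σ k) k ≤ β * V (σ k) (k-1) := hcontract k hk
        _ ≤ β * (μ * V (σ (k-1)) (k-1)) :=
            mul_le_mul_of_nonneg_left (hcompare _ _ _) hβ0.le
        _ = μ * β * V (σ (k-1)) (k-1) := by ring
  intro k₁ k₂ h
  induction k₂, h using Nat.le_induction with
  | base =>
      have h1 : (1:ℕ) ≤ k₁ + 1 := Nat.le_add_left 1 k₁
      have := step (k₁+1) h1
      simp only [Nat.add_sub_cancel] at this
      have hcard : ((Finset.Ioc k₁ (k₁+1)).filter (fun k => σ k ≠ σ (k - 1))).card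
          = (if σ (k₁+1) ≠ σ k₁ then 1 else 0) := by
        rw [show Finset.Ioc k₁ (k₁+1) = {k₁+1} by
          ext x; simp only [Finset.mem_Ioc, Finset.mem_singleton]; omega]
        by_cases hs : σ (k₁+1) = σ k₁ <;>
          simp [Finset.filter_singleton, hs, Nat.add_sub_cancel]
      rw [hcard]
      simpa [show k₁ + 1 - k₁ = 1 by omega] using this
  | succ n hn ih =>
      have hstep := step (n+1) (Nat.le_add_left 1 n)
      simp only [Nat.add_sub_cancel] at hstep
      have hcard : ((Finset.Ioc k₁ (n+1)).filter (fun k => σ k ≠ σ (k - 1))).card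
          = ((Finset.Ioc k₁ n).filter (fun k => σ k ≠ σ (k - 1))).card
            + (if σ (n+1) ≠ σ n then 1 else 0) := by
        rw [show Finset.Ioc k₁ (n+1) = insert (n+1) (Finset.Ioc k₁ n) by
          ext x; simp [Finset.mem_Ioc, Nat.lt_succ_iff]; omega]
        rw [Finset.filter_insert]
        by_cases hs : σ (n+1) = σ n <;>
          simp [hs, Finset.card_insert_of_notMem, Nat.add_sub_cancel,
            (by simp : (n+1) ∉ Finset.Ioc k₁ n)]
      have hβpow : (n + 1 - k₁) = (n - k₁) + 1 := by omega
      calc V (σ (n+1)) (n+1)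
          ≤ μ ^ (if σ (n+1) ≠ σ n then 1 else 0) * β * V (σ n) n := hstep
        _ ≤ μ ^ (if σ (n+1) ≠ σ n then 1 else 0) * β *
            (μ ^ ((Finset.Ioc k₁ n).filter (fun k => σ k ≠ σ (k - 1))).card *
              β ^ (n - k₁) * V (σ k₁) k₁) := by
            apply mul_le_mul_of_nonneg_left ih
            positivity
        _ = μ ^ (((Finset.Ioc k₁ n).filter (fun k => σ k ≠ σ (k - 1))).card
              + (if σ (n+1) ≠ σ n then 1 else 0)) * β ^ ((n - k₁) + 1) * V (σ k₁) k₁ := by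
            rw [pow_add, pow_add, pow_one]; ring
        _ = _ := by rw [hcard, hβpow]
end

section
/- Let M ≥ 1, let β̄ ∈ (0,1) and μ̄ > 1 be real numbers, set τ = -ln(μ̄)/ln(β̄), let N₀ ≥ 0, let σ : ℕ → Fin M be a selecting signal, and let V : Fin M → ℕ → ℝ be a family of nonnegative functions such that (i) for every k ≥ 1, V (σ k) k ≤ β̄ · V (σ k) (k-1), and (ii) for all i, j ∈ Fin M and all k, V i k ≤ μ̄ · V j k. If for all k₁ < k₂ the number of switches satisfies N(k₁,k₂) ≤ N₀ + (k₂ - k₁)/τ, then for all k₁ < k₂, V (σ k₂) k₂ ≤ μ̄^(N₀) · V (σ k₁) k₁. -/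
/-!
Over a horizon [k₁, k₂] every step contracts the active distance by β and every switch costs at
most a factor μ, so `V (σ k₂) k₂ ≤ β ^ (k₂ - k₁) * μ ^ N(k₁, k₂) * V (σ k₁) k₁`. The dwell time τ
is chosen so that `β * μ ^ (1 / τ) = 1`; hence the bound `N ≤ N₀ + (k₂ - k₁) / τ` makes the
factor in front at most `μ ^ N₀`.
-/

open Finset Real

section SwitchCount

variable {ι : Type*} [DecidableEq ι]

def switchCount (σ : ℕ → ι) (k₁ k₂ : ℕ) : ℕ :=
  #{k ∈ Ioc k₁ k₂ | σ k ≠ σ (k - 1)}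

@[simp]
lemma switchCount_self (σ : ℕ → ι) (k : ℕ) : switchCount σ k k = 0 := by
  simp [switchCount]

lemma switchCount_succ (σ : ℕ → ι) {k₁ n : ℕ} (h : k₁ ≤ n) :
    switchCount σ k₁ (n + 1) = switchCount σ k₁ n + if σ (n + 1) = σ n then 0 else 1 := by
  unfold switchCount
  rw [← insert_Ioc_right_eq_Ioc_add_one h, filter_insert, Nat.add_sub_cancel]
  by_cases hs : σ (n + 1) = σ n
  · simp [hs]
  · simp [hs, card_insert_of_notMem]

lemma apply_le_pow_mul_pow_switchCount_mul {σ : ℕ → ι} {V : ι → ℕ → ℝ} {β μ : ℝ}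
    (hβ : 0 ≤ β) (hμ : 0 ≤ μ)
    (hcontract : ∀ k, 1 ≤ k → V (σ k) k ≤ β * V (σ k) (k - 1))
    (hcompare : ∀ i j k, V i k ≤ μ * V j k) {k₁ k₂ : ℕ} (h : k₁ ≤ k₂) :
    V (σ k₂) k₂ ≤ β ^ (k₂ - k₁) * μ ^ switchCount σ k₁ k₂ * V (σ k₁) k₁ := by
  induction k₂, h using Nat.le_induction with
  | base => simp
  | succ n hn ih =>
    have hstep : V (σ (n + 1)) (n + 1) ≤ β * V (σ (n + 1)) n := hcontract (n + 1) le_add_self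
    rw [switchCount_succ σ hn, Nat.sub_add_comm hn, pow_succ, pow_add]
    split_ifs with hs
    · calc V (σ (n + 1)) (n + 1) ≤ β * V (σ n) n := hs ▸ hstep
        _ ≤ β * (β ^ (n - k₁) * μ ^ switchCount σ k₁ n * V (σ k₁) k₁) := by gcongr
        _ = _ := by ring
    · calc V (σ (n + 1)) (n + 1) ≤ β * (μ * V (σ n) n) := hstep.trans (by gcongr; exact hcompare ..)
        _ ≤ β * (μ * (β ^ (n - k₁) * μ ^ switchCount σ k₁ n * V (σ k₁) k₁)) := by gcongr
        _ = _ := by ring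

end SwitchCount

lemma rpow_mul_rpow_div_neg_log_div_log_eq_one {β μ : ℝ} (hβ : 0 < β) (hμ : 0 < μ)
    (hlogμ : log μ ≠ 0) (x : ℝ) : β ^ x * μ ^ (x / (-log μ / log β)) = 1 := by
  rw [rpow_def_of_pos hβ, rpow_def_of_pos hμ, ← exp_add, exp_eq_one_iff]
  rcases eq_or_ne (log β) 0 with h | h
  · simp [h]
  · field_simp; ring

lemma rpow_mul_rpow_le_rpow_of_le_add_div_neg_log_div_log {β μ x N N₀ : ℝ} (hβ : 0 < β)
    (hμ : 1 < μ) (hN : N ≤ N₀ + x / (-log μ / log β)) : β ^ x * μ ^ N ≤ μ ^ N₀ := by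
  have hμ0 : 0 < μ := one_pos.trans hμ
  calc β ^ x * μ ^ N ≤ β ^ x * μ ^ (N₀ + x / (-log μ / log β)) := by
        gcongr
        exact hμ.le
    _ = μ ^ N₀ * (β ^ x * μ ^ (x / (-log μ / log β))) := by rw [rpow_add hμ0]; ring
    _ = μ ^ N₀ := by
        rw [rpow_mul_rpow_div_neg_log_div_log_eq_one hβ hμ0 (log_pos hμ).ne', mul_one]

theorem sola_dwell_time_regret_bound_general
    (M : ℕ) (β μ : ℝ) (hβ0 : 0 < β) (hμ : 1 < μ)
    (τ : ℝ) (hτ : τ = -Real.log μ / Real.log β)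
    (N₀ : ℝ)
    (σ : ℕ → Fin M) (V : Fin M → ℕ → ℝ)
    (hVnonneg : ∀ i k, 0 ≤ V i k)
    (hcontract : ∀ k, 1 ≤ k → V (σ k) k ≤ β * V (σ k) (k - 1))
    (hcompare : ∀ i j k, V i k ≤ μ * V j k)
    (hswitch : ∀ k₁ k₂ : ℕ, k₁ < k₂ →
      (((Finset.Ioc k₁ k₂).filter (fun k => σ k ≠ σ (k - 1))).card : ℝ) ≤
        N₀ + ((k₂ : ℝ) - (k₁ : ℝ)) / τ) :
    ∀ k₁ k₂ : ℕ, k₁ < k₂ → V (σ k₂) k₂ ≤ μ ^ N₀ * V (σ k₁) k₁ := by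
  intro k₁ k₂ hk
  subst hτ
  have hdecay := apply_le_pow_mul_pow_switchCount_mul hβ0.le (by linarith) hcontract hcompare hk.le
  have hdwell : β ^ ((k₂ - k₁ : ℕ) : ℝ) * μ ^ (switchCount σ k₁ k₂ : ℝ) ≤ μ ^ N₀ :=
    rpow_mul_rpow_le_rpow_of_le_add_div_neg_log_div_log hβ0 hμ
      (by rw [Nat.cast_sub hk.le]; exact hswitch k₁ k₂ hk)
  rw [rpow_natCast, rpow_natCast] at hdwell
  calc V (σ k₂) k₂ ≤ β ^ (k₂ - k₁) * μ ^ switchCount σ k₁ k₂ * V (σ k₁) k₁ := hdecay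
    _ ≤ μ ^ N₀ * V (σ k₁) k₁ := by gcongr; exact hVnonneg ..

theorem sola_dwell_time_regret_bound
    (M : ℕ) (hM : 1 ≤ M) (β μ : ℝ) (hβ0 : 0 < β) (hβ1 : β < 1) (hμ : 1 < μ)
    (τ : ℝ) (hτ : τ = -Real.log μ / Real.log β)
    (N₀ : ℝ) (hN₀ : 0 ≤ N₀)
    (σ : ℕ → Fin M) (V : Fin M → ℕ → ℝ)
    (hVnonneg : ∀ i k, 0 ≤ V i k)
    (hcontract : ∀ k, 1 ≤ k → V (σ k) k ≤ β * V (σ k) (k - 1))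
    (hcompare : ∀ i j k, V i k ≤ μ * V j k)
    (hswitch : ∀ k₁ k₂ : ℕ, k₁ < k₂ →
      (((Finset.Ioc k₁ k₂).filter (fun k => σ k ≠ σ (k - 1))).card : ℝ) ≤
        N₀ + ((k₂ : ℝ) - (k₁ : ℝ)) / τ) :
    ∀ k₁ k₂ : ℕ, k₁ < k₂ → V (σ k₂) k₂ ≤ μ ^ N₀ * V (σ k₁) k₁ :=
  sola_dwell_time_regret_bound_general M β μ hβ0 hμ τ hτ N₀ σ V hVnonneg hcontract hcompare hswitch
end
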